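/- arXiv:1502.07796 — 2 statements merged into one kernel-verified Lean document; each statement's English description precedes it below -/
import Mathlib

section
/- Let R be a commutative ring, and let V be the free R-module spanned by isomorphism classes of finite rooted directed acyclic multigraphs with source root, equipped with the insertion operator G₁ ⊲ G₂ := Σ_{v ∈ V(G₁)} [G₁ ⊲_v G₂], where G₁ ⊲_v G₂ is obtained by identifying the root of G₂ with the vertex v of G₁. Then the bracket [x, y] := x ⊲ y − y ⊲ x makes V into a Lie algebra: it is bilinear, satisfies [x, x] = 0, and satisfies the Jacobi identity [x,[y,z]] + [z,[x,y]] + [y,[z,x]] = 0. -/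
/-!
The bracket is the commutator of the insertion operator `⊲`, so it suffices that `⊲` is right
pre-Lie, i.e. that `(a ⊲ b) ⊲ c - a ⊲ (b ⊲ c)` is symmetric in `b` and `c`: the Jacobi identity of
a commutator is the sum of three instances of that identity.

On basis graphs, `(G₁ ⊲ G₂) ⊲ G₃` inserts `G₃` at every vertex of some `G₁ ⊲_v G₂`, that is at a
vertex of `G₁` or at a non-root vertex of `G₂`. In `G₁ ⊲ (G₂ ⊲ G₃)` the graph `G₃` always lands
in `G₂`, whose root is `v`, and `(G₁ ⊲_v G₂) ⊲_w G₃ ≅ G₁ ⊲_v (G₂ ⊲_w G₃)` cancels these terms.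
What remains is the sum over `u ≠ v` in `V(G₁)` of `G₁` with `G₂` glued at `v` and `G₃` glued at
`u`, which is symmetric in `G₂` and `G₃`. Gluing keeps graphs acyclic with source root because no
edge of the inserted graph enters its root.
-/

open scoped Classical

noncomputable section

/-- A finite rooted directed multigraph: finite vertex and edge types together with
source and target maps, and a marked root vertex. -/
structure RootedMultigraph : Type 1 where
  V : Type
  E : Type
  [fintV : Fintype V]
  [fintE : Fintype E]
  src : E → V
  tgt : E → V
  root : V

attribute [instance] RootedMultigraph.fintV RootedMultigraph.fintE

namespace RootedMultigraph

/-- A graph is acyclic if it contains no directed cycle. -/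
def Acyclic (G : RootedMultigraph) : Prop :=
  ¬ ∃ (n : ℕ) (e : Fin (n + 1) → G.E), ∀ i, G.tgt (e i) = G.src (e (i + 1))

/-- The root vertex is a source: no edge has it as target. -/
def RootIsSource (G : RootedMultigraph) : Prop := ∀ e : G.E, G.tgt e ≠ G.root

/-- A rooted directed acyclic multigraph with source root. -/
def Good (G : RootedMultigraph) : Prop := G.Acyclic ∧ G.RootIsSource

/-- `G₁ ⊲_v G₂`: the graph obtained from the disjoint union of `G₁` and `G₂` by
identifying the root of `G₂` with the vertex `v` of `G₁`, rooted at the root of `G₁`. -/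
def glue (G₁ : RootedMultigraph) (v : G₁.V) (G₂ : RootedMultigraph) : RootedMultigraph where
  V := G₁.V ⊕ {w : G₂.V // w ≠ G₂.root}
  E := G₁.E ⊕ G₂.E
  src := Sum.elim (fun e => Sum.inl (G₁.src e))
    (fun e => if h : G₂.src e = G₂.root then Sum.inl v else Sum.inr ⟨G₂.src e, h⟩)
  tgt := Sum.elim (fun e => Sum.inl (G₁.tgt e))
    (fun e => if h : G₂.tgt e = G₂.root then Sum.inl v else Sum.inr ⟨G₂.tgt e, h⟩)
  root := Sum.inl G₁.root

/-- Isomorphism of rooted multigraphs. -/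
def Iso (G G' : RootedMultigraph) : Prop :=
  ∃ (eV : G.V ≃ G'.V) (eE : G.E ≃ G'.E),
    (∀ e, eV (G.src e) = G'.src (eE e)) ∧
    (∀ e, eV (G.tgt e) = G'.tgt (eE e)) ∧ eV G.root = G'.root

end RootedMultigraph

/-- Finite rooted directed acyclic multigraphs with source root. -/
abbrev RootedDAG := {G : RootedMultigraph // G.Good}

def dagIsoRel : RootedDAG → RootedDAG → Prop := fun G G' => G.1.Iso G'.1

/-- Isomorphism classes of finite rooted directed acyclic multigraphs with source root. -/
abbrev DAGClass := Quot dagIsoRel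

/-- The (right) pre-Lie identity for a bilinear map. -/
def IsPreLie {R M : Type*} [CommRing R] [AddCommGroup M] [Module R M]
    (t : M →ₗ[R] M →ₗ[R] M) : Prop :=
  ∀ x y z : M, t (t x y) z - t x (t y z) = t (t x z) y - t x (t z y)

section PreLie

variable {R M : Type*} [CommRing R] [AddCommGroup M] [Module R M]

theorem IsPreLie.jacobi {t : M →ₗ[R] M →ₗ[R] M} (ht : IsPreLie t) (x y z : M) :
    (t x (t y z - t z y) - t (t y z - t z y) x)
      + (t z (t x y - t y x) - t (t x y - t y x) z)
      + (t y (t z x - t x z) - t (t z x - t x z) y) = 0 := by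
  have hx := ht x y z
  have hy := ht y z x
  have hz := ht z x y
  simp only [map_sub, LinearMap.sub_apply]
  linear_combination (norm := abel) -hx - hy - hz

variable {α : Type*}

theorem isPreLie_of_single (t : (α →₀ R) →ₗ[R] (α →₀ R) →ₗ[R] (α →₀ R))
    (h : ∀ a b c : α,
      t (t (.single a 1) (.single b 1)) (.single c 1) - t (.single a 1) (t (.single b 1) (.single c 1))
        = t (t (.single a 1) (.single c 1)) (.single b 1)
          - t (.single a 1) (t (.single c 1) (.single b 1))) :
    IsPreLie t := by
  -- Free the variables one at a time, last first: linear maps that agree on basis vectors agree.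
  have ext {f g : (α →₀ R) →ₗ[R] (α →₀ R)}
      (hfg : ∀ a, f (.single a 1) = g (.single a 1)) (x : α →₀ R) : f x = g x := by
    rw [Finsupp.basisSingleOne.ext (f₁ := f) (f₂ := g) (by simpa using hfg)]
  have h₃ (a b : α) (z : α →₀ R) :
      t (t (.single a 1) (.single b 1)) z - t (.single a 1) (t (.single b 1) z)
        = t (t (.single a 1) z) (.single b 1) - t (.single a 1) (t z (.single b 1)) :=
    ext (f := t (t (.single a 1) (.single b 1)) - t (.single a 1) ∘ₗ t (.single b 1))
      (g := (t.flip (.single b 1)) ∘ₗ t (.single a 1) - t (.single a 1) ∘ₗ t.flip (.single b 1))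
      (h a b) z
  have h₂ (a : α) (y z : α →₀ R) :
      t (t (.single a 1) y) z - t (.single a 1) (t y z)
        = t (t (.single a 1) z) y - t (.single a 1) (t z y) :=
    ext (f := t.flip z ∘ₗ t (.single a 1) - t (.single a 1) ∘ₗ t.flip z)
      (g := t (t (.single a 1) z) - t (.single a 1) ∘ₗ t z)
      (fun b => h₃ a b z) y
  intro x y z
  exact ext (f := t.flip z ∘ₗ t.flip y - t.flip (t y z))
    (g := t.flip y ∘ₗ t.flip z - t.flip (t z y)) (fun a => h₂ a y z) x

end PreLie

def Equiv.sumRightComm (α β γ : Type*) : (α ⊕ β) ⊕ γ ≃ (α ⊕ γ) ⊕ β :=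
  (Equiv.sumAssoc α β γ).trans
    (((Equiv.refl α).sumCongr (Equiv.sumComm β γ)).trans (Equiv.sumAssoc α γ β).symm)

open Fin.NatCast in
theorem Fin.forall_of_imp_add_one {n : ℕ} {P : Fin (n + 1) → Prop} {i₀ : Fin (n + 1)}
    (h₀ : P i₀) (hsucc : ∀ i, P i → P (i + 1)) (i : Fin (n + 1)) : P i := by
  have hk : ∀ k : ℕ, P (i₀ + (k : Fin (n + 1))) := by
    intro k
    induction k with
    | zero => simpa using h₀
    | succ k ih => simpa [add_assoc] using hsucc _ ih
  simpa using hk (i - i₀).val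

namespace RootedMultigraph

variable {G₁ G₁' G₂ G₂' G₃ : RootedMultigraph}

/-- The vertex of `G₁ ⊲_v G₂` that `w ∈ V(G₂)` becomes. -/
def glueVertex (G₁ : RootedMultigraph) (v : G₁.V) (G₂ : RootedMultigraph) (w : G₂.V) :
    (G₁.glue v G₂).V :=
  if h : w = G₂.root then Sum.inl v else Sum.inr ⟨w, h⟩

@[simp]
theorem glueVertex_root (v : G₁.V) : G₁.glueVertex v G₂ G₂.root = Sum.inl v := dif_pos rfl

@[simp]
theorem glueVertex_of_ne (v : G₁.V) {w : G₂.V} (hw : w ≠ G₂.root) :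
    G₁.glueVertex v G₂ w = Sum.inr ⟨w, hw⟩ := dif_neg hw

theorem glueVertex_injective (v : G₁.V) : Function.Injective (G₁.glueVertex v G₂) := by
  intro w w' h
  by_cases hw : w = G₂.root <;> by_cases hw' : w' = G₂.root
  · rw [hw, hw']
  · simp [hw, glueVertex_of_ne _ hw'] at h
  · simp [hw', glueVertex_of_ne _ hw] at h
  · rw [glueVertex_of_ne _ hw, glueVertex_of_ne _ hw'] at h
    exact congrArg Subtype.val (Sum.inr_injective h)

@[simp] theorem glue_src_inl (v : G₁.V) (e : G₁.E) :
    (G₁.glue v G₂).src (Sum.inl e) = Sum.inl (G₁.src e) := rfl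

@[simp] theorem glue_src_inr (v : G₁.V) (e : G₂.E) :
    (G₁.glue v G₂).src (Sum.inr e) = G₁.glueVertex v G₂ (G₂.src e) := rfl

@[simp] theorem glue_tgt_inl (v : G₁.V) (e : G₁.E) :
    (G₁.glue v G₂).tgt (Sum.inl e) = Sum.inl (G₁.tgt e) := rfl

@[simp] theorem glue_tgt_inr (v : G₁.V) (e : G₂.E) :
    (G₁.glue v G₂).tgt (Sum.inr e) = G₁.glueVertex v G₂ (G₂.tgt e) := rfl

@[simp] theorem glue_root (v : G₁.V) : (G₁.glue v G₂).root = Sum.inl G₁.root := rfl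

theorem glue_rootIsSource (h₁ : G₁.RootIsSource) (h₂ : G₂.RootIsSource) (v : G₁.V) :
    (G₁.glue v G₂).RootIsSource := by
  rintro (e | e) he
  · exact h₁ e (Sum.inl_injective he)
  · simp [glueVertex_of_ne _ (h₂ e)] at he

theorem glue_acyclic (h₁ : G₁.Acyclic) (h₂ : G₂.Good) (v : G₁.V) :
    (G₁.glue v G₂).Acyclic := by
  rintro ⟨n, e, he⟩
  by_cases hright : ∃ i, (e i).isRight
  · -- no edge of `G₂` ends at its root, so the cycle never leaves `G₂`
    have hsucc : ∀ i, (e i).isRight → (e (i + 1)).isRight := by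
      intro i hi
      obtain ⟨f, hf⟩ := Sum.isRight_iff.1 hi
      have hi := he i
      rcases hnext : e (i + 1) with g | g
      · simp [hf, hnext, glueVertex_of_ne _ (h₂.2 f)] at hi
      · rfl
    obtain ⟨i₀, hi₀⟩ := hright
    choose f hf using fun i => Sum.isRight_iff.1 (Fin.forall_of_imp_add_one hi₀ hsucc i)
    refine h₂.1 ⟨n, f, fun i => glueVertex_injective v ?_⟩
    simpa [hf] using he i
  · push Not at hright
    choose f hf using fun i => Sum.isLeft_iff.1 (Sum.not_isRight.1 (hright i))
    refine h₁ ⟨n, f, fun i => ?_⟩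
    have hi := he i
    rw [hf, hf, glue_tgt_inl, glue_src_inl] at hi
    exact Sum.inl_injective hi

theorem glue_good (h₁ : G₁.Good) (h₂ : G₂.Good) (v : G₁.V) : (G₁.glue v G₂).Good :=
  ⟨glue_acyclic h₁.1 h₂ v, glue_rootIsSource h₁.2 h₂.2 v⟩

theorem Iso.refl (G : RootedMultigraph) : G.Iso G :=
  ⟨Equiv.refl _, Equiv.refl _, fun _ => rfl, fun _ => rfl, rfl⟩

theorem Iso.glue (h₁ : G₁.Iso G₁') (h₂ : G₂.Iso G₂') :
    ∃ e : G₁.V ≃ G₁'.V, ∀ v, (G₁.glue v G₂).Iso (G₁'.glue (e v) G₂') := by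
  obtain ⟨eV, eE, hs₁, ht₁, hr₁⟩ := h₁
  obtain ⟨fV, fE, hs₂, ht₂, hr₂⟩ := h₂
  have hroot (w : G₂.V) : w ≠ G₂.root ↔ fV w ≠ G₂'.root := by
    rw [← hr₂, fV.injective.ne_iff]
  refine ⟨eV, fun v => ?_⟩
  let φ : (G₁.glue v G₂).V ≃ (G₁'.glue (eV v) G₂').V :=
    Equiv.sumCongr eV (fV.subtypeEquiv hroot)
  have hφ (w : G₂.V) : φ (G₁.glueVertex v G₂ w) = G₁'.glueVertex (eV v) G₂' (fV w) := by
    by_cases hw : w = G₂.root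
    · rw [hw, glueVertex_root, hr₂, glueVertex_root]
      rfl
    · rw [glueVertex_of_ne _ hw, glueVertex_of_ne _ ((hroot w).1 hw)]
      rfl
  refine ⟨φ, Equiv.sumCongr eE fE, ?_, ?_, congrArg Sum.inl hr₁⟩
  · rintro (e | e)
    · exact congrArg Sum.inl (hs₁ e)
    · exact (hφ _).trans (congrArg _ (hs₂ e))
  · rintro (e | e)
    · exact congrArg Sum.inl (ht₁ e)
    · exact (hφ _).trans (congrArg _ (ht₂ e))

theorem glue_glue_glueVertex_iso (v : G₁.V) (w : G₂.V) :
    ((G₁.glue v G₂).glue (G₁.glueVertex v G₂ w) G₃).Iso (G₁.glue v (G₂.glue w G₃)) := by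
  let φ : ((G₁.glue v G₂).glue (G₁.glueVertex v G₂ w) G₃).V ≃ (G₁.glue v (G₂.glue w G₃)).V :=
    { toFun := fun
        | .inl (.inl u) => .inl u
        | .inl (.inr x) => .inr ⟨.inl x.1, fun h => x.2 (Sum.inl_injective h)⟩
        | .inr z => .inr ⟨.inr z, Sum.inr_ne_inl⟩
      invFun := fun
        | .inl u => .inl (.inl u)
        | .inr ⟨.inl x, h⟩ => .inl (.inr ⟨x, fun hx => h (congrArg Sum.inl hx)⟩)
        | .inr ⟨.inr z, _⟩ => .inr z
      left_inv := by rintro ((u | x) | z) <;> rfl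
      right_inv := by rintro (u | ⟨x | z, h⟩) <;> rfl }
  have hφ₂ (x : G₂.V) :
      φ (.inl (G₁.glueVertex v G₂ x)) = G₁.glueVertex v (G₂.glue w G₃) (.inl x) := by
    by_cases hx : x = G₂.root
    · rw [hx, glueVertex_root]
      exact (glueVertex_root (G₂ := G₂.glue w G₃) v).symm
    · rw [glueVertex_of_ne _ hx,
        glueVertex_of_ne (G₂ := G₂.glue w G₃) (w := .inl x) v fun h => hx (Sum.inl_injective h)]
      rfl
  have hφ₃ (z : G₃.V) :
      φ ((G₁.glue v G₂).glueVertex (G₁.glueVertex v G₂ w) G₃ z)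
        = G₁.glueVertex v (G₂.glue w G₃) (G₂.glueVertex w G₃ z) := by
    by_cases hz : z = G₃.root
    · subst hz
      simp only [glueVertex_root]
      exact hφ₂ w
    · rw [glueVertex_of_ne _ hz, glueVertex_of_ne _ hz,
        glueVertex_of_ne (G₂ := G₂.glue w G₃) (w := .inr ⟨z, hz⟩) v Sum.inr_ne_inl]
      rfl
  refine ⟨φ, Equiv.sumAssoc _ _ _, ?_, ?_, rfl⟩
  · rintro ((e | e) | e)
    · rfl
    · exact hφ₂ _
    · exact hφ₃ _
  · rintro ((e | e) | e)
    · rfl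
    · exact hφ₂ _
    · exact hφ₃ _

theorem glue_glue_inl_iso_comm (v u : G₁.V) :
    ((G₁.glue v G₂).glue (.inl u) G₃).Iso ((G₁.glue u G₃).glue (.inl v) G₂) := by
  let φ : ((G₁.glue v G₂).glue (.inl u) G₃).V ≃ ((G₁.glue u G₃).glue (.inl v) G₂).V :=
    Equiv.sumRightComm _ _ _
  have hφ₂ (x : G₂.V) :
      φ (.inl (G₁.glueVertex v G₂ x)) = (G₁.glue u G₃).glueVertex (.inl v) G₂ x := by
    by_cases hx : x = G₂.root <;> simp only [glueVertex, hx, ↓reduceDIte] <;> rfl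
  have hφ₃ (z : G₃.V) :
      φ ((G₁.glue v G₂).glueVertex (.inl u) G₃ z) = .inl (G₁.glueVertex u G₃ z) := by
    by_cases hz : z = G₃.root <;> simp only [glueVertex, hz, ↓reduceDIte] <;> rfl
  refine ⟨φ, Equiv.sumRightComm _ _ _, ?_, ?_, rfl⟩
  · rintro ((e | e) | e)
    · rfl
    · exact hφ₂ _
    · exact hφ₃ _
  · rintro ((e | e) | e)
    · rfl
    · exact hφ₂ _
    · exact hφ₃ _

end RootedMultigraph

namespace RootedDAG

open RootedMultigraph

def glue (G₁ : RootedDAG) (v : G₁.1.V) (G₂ : RootedDAG) : RootedDAG :=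
  ⟨G₁.1.glue v G₂.1, glue_good G₁.2 G₂.2 v⟩

variable (R : Type*)

section Semiring

variable [Semiring R]

def single (G : RootedDAG) : DAGClass →₀ R := Finsupp.single (Quot.mk dagIsoRel G) 1

def insertion (G₁ G₂ : RootedDAG) : DAGClass →₀ R := ∑ v : G₁.1.V, single R (G₁.glue v G₂)

variable {R}

theorem single_eq_of_iso {G G' : RootedDAG} (h : G.1.Iso G'.1) : single R G = single R G' := by
  rw [single, single, Quot.sound (show dagIsoRel G G' from h)]

theorem insertion_congr {G₁ G₁' G₂ G₂' : RootedDAG} (h₁ : dagIsoRel G₁ G₁')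
    (h₂ : dagIsoRel G₂ G₂') : insertion R G₁ G₂ = insertion R G₁' G₂' := by
  obtain ⟨e, he⟩ := Iso.glue h₁ h₂
  exact Fintype.sum_equiv e _ _ fun v => single_eq_of_iso (he v)

theorem insertion_glue_eq_sum (G₁ G₂ G₃ : RootedDAG) (v : G₁.1.V) :
    insertion R (G₁.glue v G₂) G₃
      = ∑ u : G₁.1.V, single R ((G₁.glue v G₂).glue (.inl u) G₃)
        + ∑ x : {x : G₂.1.V // x ≠ G₂.1.root}, single R ((G₁.glue v G₂).glue (.inr x) G₃) :=
  Fintype.sum_sum_type _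

theorem sum_single_glue_glue (G₁ G₂ G₃ : RootedDAG) (v : G₁.1.V) :
    ∑ w : G₂.1.V, single R (G₁.glue v (G₂.glue w G₃))
      = single R ((G₁.glue v G₂).glue (.inl v) G₃)
        + ∑ x : {x : G₂.1.V // x ≠ G₂.1.root}, single R ((G₁.glue v G₂).glue (.inr x) G₃) := by
  have hiso (w : G₂.1.V) : single R (G₁.glue v (G₂.glue w G₃))
      = single R ((G₁.glue v G₂).glue (G₁.1.glueVertex v G₂.1 w) G₃) :=
    (single_eq_of_iso (glue_glue_glueVertex_iso v w)).symm
  rw [Fintype.sum_congr _ _ hiso, Fintype.sum_eq_add_sum_subtype_ne _ G₂.1.root, glueVertex_root]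
  congr 1
  exact Fintype.sum_congr _ _ fun x => by rw [glueVertex_of_ne _ x.2]

end Semiring

end RootedDAG

def DAGClass.insertion (R : Type*) [Semiring R] : DAGClass → DAGClass → DAGClass →₀ R :=
  Quot.lift₂ (RootedDAG.insertion R)
    (fun G₁ _ _ h => RootedDAG.insertion_congr (RootedMultigraph.Iso.refl G₁.1) h)
    (fun _ _ G₂ h => RootedDAG.insertion_congr h (RootedMultigraph.Iso.refl G₂.1))

def insertionOp (R : Type*) [CommSemiring R] :
    (DAGClass →₀ R) →ₗ[R] (DAGClass →₀ R) →ₗ[R] (DAGClass →₀ R) :=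
  Finsupp.linearCombination R fun a => Finsupp.linearCombination R (DAGClass.insertion R a)

theorem insertionOp_single_single {R : Type*} [CommSemiring R] (a b : DAGClass) :
    insertionOp R (.single a 1) (.single b 1) = DAGClass.insertion R a b := by
  simp [insertionOp]

namespace RootedDAG

section CommSemiring

variable {R : Type*} [CommSemiring R]

theorem insertionOp_single (G₁ G₂ : RootedDAG) :
    insertionOp R (single R G₁) (single R G₂) = insertion R G₁ G₂ :=
  insertionOp_single_single _ _

theorem insertionOp_insertion_single (G₁ G₂ G₃ : RootedDAG) :
    insertionOp R (insertion R G₁ G₂) (single R G₃) = ∑ v, insertion R (G₁.glue v G₂) G₃ := by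
  rw [insertion, map_sum, LinearMap.sum_apply]
  exact Fintype.sum_congr _ _ fun v => insertionOp_single _ _

theorem insertionOp_single_insertion (G₁ G₂ G₃ : RootedDAG) :
    insertionOp R (single R G₁) (insertion R G₂ G₃) = ∑ w, insertion R G₁ (G₂.glue w G₃) := by
  rw [insertion, map_sum]
  exact Fintype.sum_congr _ _ fun w => insertionOp_single _ _

end CommSemiring

section CommRing

variable {R : Type*} [CommRing R]

theorem insertionOp_associator (G₁ G₂ G₃ : RootedDAG) :
    insertionOp R (insertionOp R (single R G₁) (single R G₂)) (single R G₃)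
        - insertionOp R (single R G₁) (insertionOp R (single R G₂) (single R G₃))
      = ∑ v, ∑ u, single R ((G₁.glue v G₂).glue (.inl u) G₃)
        - ∑ v, single R ((G₁.glue v G₂).glue (.inl v) G₃) := by
  rw [insertionOp_single G₁ G₂, insertionOp_single G₂ G₃, insertionOp_insertion_single,
    insertionOp_single_insertion]
  simp only [insertion_glue_eq_sum]
  simp only [insertion]
  rw [Finset.sum_comm (γ := G₂.1.V)]
  simp only [sum_single_glue_glue, Finset.sum_add_distrib]
  exact add_sub_add_right_eq_sub _ _ _

theorem insertionOp_associator_comm (G₁ G₂ G₃ : RootedDAG) :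
    insertionOp R (insertionOp R (single R G₁) (single R G₂)) (single R G₃)
        - insertionOp R (single R G₁) (insertionOp R (single R G₂) (single R G₃))
      = insertionOp R (insertionOp R (single R G₁) (single R G₃)) (single R G₂)
        - insertionOp R (single R G₁) (insertionOp R (single R G₃) (single R G₂)) := by
  have hcomm (v u : G₁.1.V) : single R ((G₁.glue v G₂).glue (.inl u) G₃)
      = single R ((G₁.glue u G₃).glue (.inl v) G₂) :=
    single_eq_of_iso (RootedMultigraph.glue_glue_inl_iso_comm v u)
  rw [insertionOp_associator, insertionOp_associator, Finset.sum_comm]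
  simp only [hcomm]

end CommRing

end RootedDAG

theorem isPreLie_insertionOp (R : Type*) [CommRing R] : IsPreLie (insertionOp R) := by
  refine isPreLie_of_single _ fun a b c => ?_
  obtain ⟨G₁, rfl⟩ := Quot.exists_rep a
  obtain ⟨G₂, rfl⟩ := Quot.exists_rep b
  obtain ⟨G₃, rfl⟩ := Quot.exists_rep c
  exact RootedDAG.insertionOp_associator_comm G₁ G₂ G₃

/-- the bracket `[x, y] := x ⊲ y − y ⊲ x` associated to the insertion
operator `G₁ ⊲ G₂ = Σ_{v ∈ V(G₁)} [G₁ ⊲_v G₂]` makes the free `R`-module on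
isomorphism classes of finite rooted directed acyclic multigraphs with source root
into a Lie algebra: it is bilinear, alternating, and satisfies the Jacobi identity. -/
theorem insertion_bracket_of_rooted_dags_is_lie (R : Type) [CommRing R] :
    ∃ ins : (DAGClass →₀ R) →ₗ[R] (DAGClass →₀ R) →ₗ[R] (DAGClass →₀ R),
      (∀ G₁ G₂ : RootedDAG,
        ∃ h : ∀ v : G₁.1.V, (G₁.1.glue v G₂.1).Good,
          ins (Finsupp.single (Quot.mk dagIsoRel G₁) 1)
              (Finsupp.single (Quot.mk dagIsoRel G₂) 1)
            = ∑ v : G₁.1.V,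
                Finsupp.single
                  (Quot.mk dagIsoRel (⟨G₁.1.glue v G₂.1, h v⟩ : RootedDAG)) (1 : R)) ∧
      (∀ (r : R) (x x' y : DAGClass →₀ R),
        (ins (r • x + x') y - ins y (r • x + x'))
          = r • (ins x y - ins y x) + (ins x' y - ins y x')) ∧
      (∀ (r : R) (x y y' : DAGClass →₀ R),
        (ins x (r • y + y') - ins (r • y + y') x)
          = r • (ins x y - ins y x) + (ins x y' - ins y' x)) ∧
      (∀ x : DAGClass →₀ R, ins x x - ins x x = 0) ∧
      (∀ x y z : DAGClass →₀ R,
        (ins x (ins y z - ins z y) - ins (ins y z - ins z y) x)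
          + (ins z (ins x y - ins y x) - ins (ins x y - ins y x) z)
          + (ins y (ins z x - ins x z) - ins (ins z x - ins x z) y) = 0) := by
  refine ⟨insertionOp R, fun G₁ G₂ => ⟨fun v => RootedMultigraph.glue_good G₁.2 G₂.2 v,
    RootedDAG.insertionOp_single G₁ G₂⟩, fun r x x' y => ?_, fun r x y y' => ?_,
    fun x => sub_self _, (isPreLie_insertionOp R).jacobi⟩
  · simp only [map_add, map_smul, LinearMap.add_apply, LinearMap.smul_apply]
    module
  · simp only [map_add, map_smul, LinearMap.add_apply, LinearMap.smul_apply]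
    module
end
end

section
/- Fix a finite nonempty set S of integers, each at least 3. Call a graph in the half-edge formalism an S-graph if it is finite, connected, and the valence of every vertex belongs to S. Let L be the smallest set of isomorphism classes of graphs in the half-edge formalism such that: (i) for each k ∈ S, the k-corolla (a single vertex with k external half-edges) belongs to L; (ii) if G ∈ L and f ≠ f' are two external half-edges of G, then the graph obtained from G by joining f and f' into an internal edge belongs to L; (iii) if G ∈ L, k ∈ S, and f is an external half-edge of G, then the graph obtained by taking the disjoint union of G with a k-corolla and joining f to one half-edge of the corolla belongs to L. Then L is exactly the set of isomorphism classes of S-graphs. -/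
open scoped Classical

noncomputable section

/-- A finite graph in the half-edge formalism. -/
structure HalfEdgeGraph : Type 1 where
  V : Type
  F : Type
  [fintV : Fintype V]
  [fintF : Fintype F]
  att : F → V
  inv : F → F

attribute [instance] HalfEdgeGraph.fintV HalfEdgeGraph.fintF

namespace HalfEdgeGraph

/-- Isomorphism of half-edge graphs. -/
def Iso (G G' : HalfEdgeGraph) : Prop :=
  ∃ (eV : G.V ≃ G'.V) (eF : G.F ≃ G'.F),
    (∀ f, eV (G.att f) = G'.att (eF f)) ∧ (∀ f, eF (G.inv f) = G'.inv (eF f))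

/-- Adjacency through an internal edge. -/
def Adj (G : HalfEdgeGraph) (u v : G.V) : Prop :=
  ∃ f, G.inv f ≠ f ∧ G.att f = u ∧ G.att (G.inv f) = v

/-- Connectedness. -/
def Connected (G : HalfEdgeGraph) : Prop :=
  Nonempty G.V ∧ ∀ u v : G.V, Relation.ReflTransGen G.Adj u v

/-- The valence of a vertex: the number of half-edges attached to it. -/
def valence (G : HalfEdgeGraph) (v : G.V) : ℕ := Fintype.card {f : G.F // G.att f = v}

end HalfEdgeGraph

/-- The `k`-corolla: a single vertex with `k` external half-edges. -/
def corolla (k : ℕ) : HalfEdgeGraph where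
  V := PUnit
  F := Fin k
  att := fun _ => PUnit.unit
  inv := id

/-- Join two external half-edges `f ≠ f'` of `G` into an internal edge. -/
def joinExt (G : HalfEdgeGraph) (f f' : G.F) : HalfEdgeGraph where
  V := G.V
  F := G.F
  att := G.att
  inv := fun g => if g = f then f' else if g = f' then f else G.inv g

/-- Disjoint union of `G` with a `k`-corolla, joining the half-edge `f` of `G` to the
half-edge `i` of the corolla. -/
def attachCorolla (G : HalfEdgeGraph) (f : G.F) (k : ℕ) (i : Fin k) : HalfEdgeGraph where
  V := G.V ⊕ PUnit
  F := G.F ⊕ Fin k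
  att := Sum.elim (fun g => Sum.inl (G.att g)) (fun _ => Sum.inr PUnit.unit)
  inv := Sum.elim
    (fun g => if g = f then Sum.inr i else Sum.inl (G.inv g))
    (fun j => if j = i then Sum.inl f else Sum.inr j)

/-- The smallest (isomorphism-invariant) class of half-edge graphs containing the
`k`-corolla for every `k ∈ S` and closed under joining two external half-edges and
under attaching a fresh `k`-corolla (`k ∈ S`) along an external half-edge. -/
inductive InLangS (S : Finset ℕ) : HalfEdgeGraph → Prop
  | corolla {k : ℕ} (hk : k ∈ S) : InLangS S (corolla k)
  | join {G : HalfEdgeGraph} (hG : InLangS S G) (f f' : G.F)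
      (hf : G.inv f = f) (hf' : G.inv f' = f') (hne : f ≠ f') :
      InLangS S (joinExt G f f')
  | attach {G : HalfEdgeGraph} (hG : InLangS S G) (f : G.F) (hf : G.inv f = f)
      {k : ℕ} (hk : k ∈ S) (i : Fin k) : InLangS S (attachCorolla G f k i)
  | iso {G G' : HalfEdgeGraph} (hG : InLangS S G) (h : G.Iso G') : InLangS S G'

/-- An `S`-graph: a finite connected half-edge graph (with genuine involution) all of
whose vertices have valence belonging to `S`. -/
def IsSGraph (S : Finset ℕ) (G : HalfEdgeGraph) : Prop :=
  Function.Involutive G.inv ∧ G.Connected ∧ ∀ v : G.V, G.valence v ∈ S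

/-!
Soundness: every production rule preserves being an `S`-graph.

Completeness, by induction on the number of vertices plus internal half-edges of an `S`-graph
`G`. If cutting some internal edge leaves `G` connected, the cut graph is a smaller `S`-graph
and `G` is recovered from it by a join. Otherwise every edge is a bridge. If `G` has a single
vertex it therefore has no internal edge (a loop is never a bridge), and it is a corolla. If not,
let `v` be a vertex whose removal keeps `G` connected (an end of a spanning tree). Two internal
half-edges at `v` would give a cycle through `v` and the connected rest, so `v` carries exactly
one; hence `G` is obtained by attaching a corolla to `G - v`, which is a smaller `S`-graph
because removing `v` turns the half-edges facing it into external ones and keeps all valences.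
-/

open Relation

namespace HalfEdgeGraph

variable {G G' : HalfEdgeGraph}

theorem adj_symm (hinv : Function.Involutive G.inv) : Std.Symm G.Adj :=
  ⟨fun _ _ ⟨f, hf, hu, hv⟩ => ⟨G.inv f, by rwa [hinv, ne_comm], hv, by rw [hinv, hu]⟩⟩

theorem reflTransGen_adj_symm (hinv : Function.Involutive G.inv) {u v : G.V}
    (h : ReflTransGen G.Adj u v) : ReflTransGen G.Adj v u :=
  haveI := adj_symm hinv
  Std.Symm.symm _ _ h

theorem Connected.of_adj (hG : G.Connected) (e : G.V → G'.V) (he : Function.Surjective e)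
    (hadj : ∀ u v, G.Adj u v → ReflTransGen G'.Adj (e u) (e v)) : G'.Connected := by
  refine ⟨hG.1.map e, fun u' v' => ?_⟩
  obtain ⟨u, rfl⟩ := he u'
  obtain ⟨v, rfl⟩ := he v'
  exact ReflTransGen.lift' e hadj u v (hG.2 u v)

theorem connected_of_forall_reflTransGen (hinv : Function.Involutive G.inv) (r : G.V)
    (h : ∀ u, ReflTransGen G.Adj u r) : G.Connected :=
  ⟨⟨r⟩, fun u v => (h u).trans (reflTransGen_adj_symm hinv (h v))⟩

theorem connected_fromRel_adj (hc : G.Connected) : (SimpleGraph.fromRel G.Adj).Connected := by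
  refine (SimpleGraph.connected_iff _).2 ⟨fun u v => ?_, hc.1⟩
  rw [SimpleGraph.reachable_iff_reflTransGen]
  refine reflTransGen_closed (fun a b hab => ?_) u v (hc.2 u v)
  by_cases hne : a = b
  · exact hne ▸ .refl
  · exact .single ((SimpleGraph.fromRel_adj _ a b).2 ⟨hne, .inl hab⟩)

theorem valence_eq_of_iso (eV : G.V ≃ G'.V) (eF : G.F ≃ G'.F)
    (hatt : ∀ f, eV (G.att f) = G'.att (eF f)) (v : G.V) : G'.valence (eV v) = G.valence v :=
  (Fintype.card_congr (eF.subtypeEquiv fun f => by rw [← hatt, eV.apply_eq_iff_eq])).symm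

end HalfEdgeGraph

open HalfEdgeGraph

section Soundness

variable {S : Finset ℕ} {G G' : HalfEdgeGraph}

theorem valence_corolla (k : ℕ) (v : (corolla k).V) : (corolla k).valence v = k :=
  (Fintype.card_congr (Equiv.subtypeUnivEquiv fun _ => rfl)).trans (Fintype.card_fin k)

theorem joinExt_involutive (hinv : Function.Involutive G.inv) {f f' : G.F} (hf : G.inv f = f)
    (hf' : G.inv f' = f') (hne : f ≠ f') : Function.Involutive (joinExt G f f').inv := by
  intro g
  have := hinv g
  simp only [joinExt]
  grind

section attachCorolla

variable {f : G.F} {k : ℕ} {i : Fin k}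

theorem attachCorolla_involutive (hinv : Function.Involutive G.inv) (hf : G.inv f = f) :
    Function.Involutive (attachCorolla G f k i).inv := by
  rintro (g | j)
  · have := hinv g
    simp only [attachCorolla]
    grind
  · simp only [attachCorolla]
    grind

theorem attachCorolla_adj_inl (hf : G.inv f = f) {u v : G.V} (h : G.Adj u v) :
    (attachCorolla G f k i).Adj (.inl u) (.inl v) := by
  obtain ⟨g, hg, rfl, rfl⟩ := h
  have hgf : g ≠ f := by rintro rfl; exact hg hf
  have hA : (attachCorolla G f k i).inv (.inl g) = .inl (G.inv g) := if_neg hgf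
  exact ⟨.inl g, by rw [hA]; exact fun h => hg (Sum.inl_injective h), rfl, by rw [hA]; rfl⟩

theorem attachCorolla_adj_inr :
    (attachCorolla G f k i).Adj (.inr PUnit.unit) (.inl (G.att f)) := by
  have hA : (attachCorolla G f k i).inv (.inr i) = .inl f := if_pos rfl
  exact ⟨.inr i, by rw [hA]; exact Sum.inl_ne_inr, rfl, by rw [hA]; rfl⟩

theorem valence_attachCorolla_inl (v : G.V) :
    (attachCorolla G f k i).valence (.inl v) = G.valence v := by
  have : IsEmpty {j : Fin k // (attachCorolla G f k i).att (.inr j) = .inl v} :=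
    ⟨fun j => Sum.inr_ne_inl j.2⟩
  exact Fintype.card_congr <| (Equiv.subtypeSum.trans (Equiv.sumEmpty _ _)).trans
    (Equiv.subtypeEquivRight fun _ => Sum.inl_injective.eq_iff)

theorem valence_attachCorolla_inr :
    (attachCorolla G f k i).valence (.inr PUnit.unit) = k := by
  have : IsEmpty {g : G.F // (attachCorolla G f k i).att (.inl g) = .inr PUnit.unit} :=
    ⟨fun g => Sum.inl_ne_inr g.2⟩
  exact (Fintype.card_congr <| (Equiv.subtypeSum.trans (Equiv.emptySum _ _)).trans
    (Equiv.subtypeUnivEquiv fun _ => rfl)).trans (Fintype.card_fin k)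

end attachCorolla

theorem IsSGraph.iso (hG : IsSGraph S G) (h : G.Iso G') : IsSGraph S G' := by
  obtain ⟨eV, eF, hatt, hinv⟩ := h
  obtain ⟨hG_inv, hG_conn, hG_val⟩ := hG
  have hinv' : ∀ f, G'.inv f = eF (G.inv (eF.symm f)) := fun f => by
    rw [hinv, eF.apply_symm_apply]
  refine ⟨fun f => ?_, hG_conn.of_adj eV eV.surjective ?_, eV.surjective.forall.2 fun v => ?_⟩
  · rw [hinv', hinv', eF.symm_apply_apply, hG_inv, eF.apply_symm_apply]
  · rintro u v ⟨f, hf, rfl, rfl⟩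
    refine .single ⟨eF f, ?_, (hatt f).symm, by rw [← hinv, ← hatt]⟩
    rwa [← hinv, eF.injective.ne_iff]
  · exact valence_eq_of_iso eV eF hatt v ▸ hG_val v

theorem isSGraph_corolla {k : ℕ} (hk : k ∈ S) : IsSGraph S (corolla k) :=
  ⟨fun _ => rfl, connected_of_forall_reflTransGen (fun _ => rfl) PUnit.unit fun _ => .refl,
    fun v => by rw [valence_corolla]; exact hk⟩

theorem IsSGraph.join (hG : IsSGraph S G) {f f' : G.F} (hf : G.inv f = f)
    (hf' : G.inv f' = f') (hne : f ≠ f') : IsSGraph S (joinExt G f f') := by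
  obtain ⟨hinv, hconn, hval⟩ := hG
  refine ⟨joinExt_involutive hinv hf hf' hne, hconn.of_adj id Function.surjective_id ?_, hval⟩
  rintro u v ⟨g, hg, rfl, rfl⟩
  have hgf : g ≠ f := by rintro rfl; exact hg hf
  have hgf' : g ≠ f' := by rintro rfl; exact hg hf'
  have hJ : (joinExt G f f').inv g = G.inv g := by simp only [joinExt, if_neg hgf, if_neg hgf']
  exact .single ⟨g, by rwa [hJ], rfl, by rw [hJ]; rfl⟩

theorem IsSGraph.attach (hG : IsSGraph S G) {f : G.F} (hf : G.inv f = f)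
    {k : ℕ} (hk : k ∈ S) (i : Fin k) : IsSGraph S (attachCorolla G f k i) := by
  obtain ⟨hinv, hconn, hval⟩ := hG
  have hinvA := attachCorolla_involutive (i := i) hinv hf
  refine ⟨hinvA, connected_of_forall_reflTransGen hinvA (.inr PUnit.unit) ?_, ?_⟩
  · rintro (u | ⟨⟩)
    · have hu : ReflTransGen (attachCorolla G f k i).Adj (.inl u) (.inl (G.att f)) :=
        ReflTransGen.lift' Sum.inl (fun a b h => .single (attachCorolla_adj_inl hf h)) _ _
          (hconn.2 u (G.att f))
      exact hu.tail ((adj_symm hinvA).symm _ _ attachCorolla_adj_inr)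
    · exact .refl
  · rintro (v | ⟨⟩)
    · exact valence_attachCorolla_inl v ▸ hval v
    · exact valence_attachCorolla_inr ▸ hk

theorem InLangS.isSGraph (h : InLangS S G) : IsSGraph S G := by
  induction h with
  | corolla hk => exact isSGraph_corolla hk
  | join _ f f' hf hf' hne ih => exact ih.join hf hf' hne
  | attach _ f hf hk i ih => exact ih.attach hf hk i
  | iso _ hiso ih => exact ih.iso hiso

end Soundness

namespace HalfEdgeGraph

def detach (G : HalfEdgeGraph) (f : G.F) : HalfEdgeGraph where
  V := G.V
  F := G.F
  att := G.att
  inv := fun g => if g = f ∨ g = G.inv f then g else G.inv g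

def deleteVertex (G : HalfEdgeGraph) (v : G.V) : HalfEdgeGraph where
  V := {u // u ≠ v}
  F := {g // G.att g ≠ v}
  att := fun g => ⟨G.att g.1, g.2⟩
  inv := fun g => if h : G.att (G.inv g.1) ≠ v then ⟨G.inv g.1, h⟩ else g

def complexity (G : HalfEdgeGraph) : ℕ :=
  Fintype.card G.V + Fintype.card {f : G.F // G.inv f ≠ f}

variable {G : HalfEdgeGraph}

section detach

variable {f g : G.F}

theorem detach_inv (g : G.F) :
    (G.detach f).inv g = if g = f ∨ g = G.inv f then g else G.inv g := rfl

theorem detach_inv_of_ne (hf : g ≠ f) (hf' : g ≠ G.inv f) : (G.detach f).inv g = G.inv g :=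
  if_neg (not_or.2 ⟨hf, hf'⟩)

theorem detach_inv_self : (G.detach f).inv f = f := if_pos (.inl rfl)

theorem detach_inv_inv_self : (G.detach f).inv (G.inv f) = G.inv f := if_pos (.inr rfl)

theorem detach_involutive (hinv : Function.Involutive G.inv) (f : G.F) :
    Function.Involutive (G.detach f).inv := by
  intro (g : G.F)
  by_cases h : g = f ∨ g = G.inv f
  · rw [detach_inv g, if_pos h, detach_inv g, if_pos h]
  · have h' : ¬(G.inv g = f ∨ G.inv g = G.inv f) := by
      rintro (h' | h')
      · exact h (.inr (by rw [← h', hinv]))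
      · exact h (.inl (hinv.injective h'))
    rw [detach_inv g, if_neg h, detach_inv, if_neg h', hinv]

theorem detach_adj_of_adj (hinv : Function.Involutive G.inv) {u v : G.V} (h : G.Adj u v)
    (hu : u ≠ G.att f) (hv : v ≠ G.att f) : (G.detach f).Adj u v := by
  obtain ⟨g, hg, rfl, rfl⟩ := h
  have hD : (G.detach f).inv g = G.inv g :=
    detach_inv_of_ne (by rintro rfl; exact hu rfl) (by rintro rfl; exact hv (by rw [hinv]))
  exact ⟨g, by rwa [hD], rfl, by rw [hD]; rfl⟩

theorem complexity_detach_lt (hf : G.inv f ≠ f) : (G.detach f).complexity < G.complexity := by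
  have hsub : ∀ g : G.F, (G.detach f).inv g ≠ g → G.inv g ≠ g := fun g hg => by
    by_cases h : g = f ∨ g = G.inv f
    · rw [detach_inv, if_pos h] at hg
      exact absurd rfl hg
    · rwa [detach_inv, if_neg h] at hg
  have hlt : Fintype.card {g : (G.detach f).F // (G.detach f).inv g ≠ g}
      < Fintype.card {g : G.F // G.inv g ≠ g} :=
    Fintype.card_lt_of_injective_of_notMem (Subtype.map id hsub)
      (Subtype.map_injective _ Function.injective_id) (b := ⟨f, hf⟩)
      fun ⟨⟨g, hg⟩, h⟩ => hg <| by
        rw [show g = f from Subtype.ext_iff.1 h]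
        exact detach_inv_self
  exact Nat.add_lt_add_left hlt _

theorem joinExt_detach_iso (hinv : Function.Involutive G.inv) (hf : G.inv f ≠ f) :
    (joinExt (G.detach f) f (G.inv f)).Iso G := by
  refine ⟨Equiv.refl _, Equiv.refl _, fun _ => rfl, fun (g : G.F) => ?_⟩
  by_cases h : g = f
  · subst h
    exact if_pos rfl
  by_cases h' : g = G.inv f
  · subst h'
    exact (if_neg h).trans ((if_pos rfl).trans (hinv f).symm)
  · exact (if_neg h).trans ((if_neg h').trans (detach_inv_of_ne h h'))

end detach

section deleteVertex

variable {v : G.V}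

theorem deleteVertex_inv_of_ne (g : {g // G.att g ≠ v}) (h : G.att (G.inv g.1) ≠ v) :
    (G.deleteVertex v).inv g = ⟨G.inv g.1, h⟩ := dif_pos h

theorem deleteVertex_inv_of_eq (g : {g // G.att g ≠ v}) (h : G.att (G.inv g.1) = v) :
    (G.deleteVertex v).inv g = g := dif_neg (not_not.2 h)

theorem deleteVertex_involutive (hinv : Function.Involutive G.inv) (v : G.V) :
    Function.Involutive (G.deleteVertex v).inv := by
  intro (g : {g // G.att g ≠ v})
  by_cases h : G.att (G.inv g.1) = v
  · rw [deleteVertex_inv_of_eq g h, deleteVertex_inv_of_eq g h]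
  · have h' : G.att (G.inv (G.inv g.1)) ≠ v := by rw [hinv]; exact g.2
    rw [deleteVertex_inv_of_ne g h, deleteVertex_inv_of_ne ⟨G.inv g.1, h⟩ h']
    exact Subtype.ext (hinv g.1)

theorem deleteVertex_adj_iff {a b : {u // u ≠ v}} :
    (G.deleteVertex v).Adj a b ↔ G.Adj a.1 b.1 := by
  constructor
  · rintro ⟨g, hg, rfl, rfl⟩
    by_cases h : G.att (G.inv g.1) = v
    · exact absurd (deleteVertex_inv_of_eq g h) hg
    · have hD := deleteVertex_inv_of_ne g h
      rw [hD] at hg ⊢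
      exact ⟨g.1, fun h' => hg (Subtype.ext h'), rfl, rfl⟩
  · rintro ⟨g, hg, ha, hb⟩
    have hD := deleteVertex_inv_of_ne ⟨g, ha ▸ a.2⟩ (hb ▸ b.2)
    refine ⟨⟨g, ha ▸ a.2⟩, ?_, Subtype.ext ha, ?_⟩ <;> rw [hD]
    · exact fun h => hg (Subtype.ext_iff.1 h)
    · exact Subtype.ext hb

theorem valence_deleteVertex (w : {u // u ≠ v}) :
    (G.deleteVertex v).valence w = G.valence w.1 :=
  Fintype.card_congr
    { toFun := fun g => ⟨g.1.1, Subtype.ext_iff.1 g.2⟩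
      invFun := fun g => ⟨⟨g.1, fun h => w.2 (g.2 ▸ h)⟩, Subtype.ext g.2⟩
      left_inv := fun _ => rfl
      right_inv := fun _ => rfl }

theorem complexity_deleteVertex_lt : (G.deleteVertex v).complexity < G.complexity := by
  have hV : Fintype.card (G.deleteVertex v).V < Fintype.card G.V :=
    Fintype.card_subtype_lt (p := (· ≠ v)) (not_not.2 rfl)
  have hsub : ∀ g : {g // G.att g ≠ v}, (G.deleteVertex v).inv g ≠ g → G.inv g.1 ≠ g.1 :=
    fun g hg h => hg (by rw [deleteVertex_inv_of_ne g (by rw [h]; exact g.2)]; exact Subtype.ext h)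
  have hF : Fintype.card {g : (G.deleteVertex v).F // (G.deleteVertex v).inv g ≠ g}
      ≤ Fintype.card {g : G.F // G.inv g ≠ g} :=
    Fintype.card_le_of_injective (Subtype.map Subtype.val hsub)
      (Subtype.map_injective _ Subtype.val_injective)
  exact Nat.add_lt_add_of_lt_of_le hV hF

end deleteVertex

theorem exists_connected_deleteVertex (hinv : Function.Involutive G.inv) (hc : G.Connected)
    [Nontrivial G.V] :
    ∃ f, G.att (G.inv f) ≠ G.att f ∧ (G.deleteVertex (G.att f)).Connected := by
  have hSG := connected_fromRel_adj hc
  obtain ⟨v, hv⟩ := hSG.exists_connected_induce_compl_singleton_of_finite_nontrivial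
  obtain ⟨u, hvu⟩ := hSG.preconnected.exists_adj_of_nontrivial v
  obtain ⟨hne, hadj⟩ := (SimpleGraph.fromRel_adj _ _ _).1 hvu
  obtain ⟨f, -, rfl, rfl⟩ := hadj.elim id ((adj_symm hinv).symm _ _)
  refine ⟨f, Ne.symm hne, ⟨⟨G.att (G.inv f), Ne.symm hne⟩⟩, fun a b => ?_⟩
  have hab := (SimpleGraph.reachable_iff_reflTransGen _ _).1
    (hv.preconnected ⟨a.1, a.2⟩ ⟨b.1, b.2⟩)
  refine ReflTransGen.lift' (fun x => (⟨x.1, x.2⟩ : {u // u ≠ G.att f})) (fun x y hxy => ?_)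
    _ _ hab
  obtain ⟨-, hxy | hyx⟩ := (SimpleGraph.fromRel_adj _ _ _).1 (SimpleGraph.induce_adj.1 hxy)
  · exact .single (deleteVertex_adj_iff.2 hxy)
  · exact .single (deleteVertex_adj_iff.2 ((adj_symm hinv).symm _ _ hyx))

theorem connected_detach_of_connected_deleteVertex (hinv : Function.Involutive G.inv)
    (hc : G.Connected) {f g : G.F} (hf : G.att (G.inv f) ≠ G.att f)
    (hconn : (G.deleteVertex (G.att f)).Connected) (hg : G.att g = G.att f) (hgf : g ≠ f) :
    (G.detach g).Connected := by
  have hlift : ∀ a b : {u // u ≠ G.att f}, ReflTransGen (G.detach g).Adj a.1 b.1 :=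
    fun a b => ReflTransGen.lift' Subtype.val (fun x y hxy => .single <|
      detach_adj_of_adj hinv (deleteVertex_adj_iff.1 hxy) (fun h => x.2 (h.trans hg))
        (fun h => y.2 (h.trans hg))) a b (hconn.2 a b)
  have hreach : ReflTransGen (G.detach g).Adj (G.att g) (G.att (G.inv g)) := by
    by_cases hw : G.att (G.inv g) = G.att f
    · rw [hw, hg]
      exact .refl
    have hstep : (G.detach g).Adj (G.att f) (G.att (G.inv f)) := by
      refine ⟨f, ?_, rfl, ?_⟩ <;> rw [detach_inv_of_ne hgf.symm (by rintro rfl; exact hw rfl)]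
      · exact fun h => hf (congrArg G.att h)
      · rfl
    rw [hg]
    exact .head hstep (hlift ⟨_, hf⟩ ⟨_, hw⟩)
  refine hc.of_adj id Function.surjective_id ?_
  rintro _ _ ⟨h, hh, rfl, rfl⟩
  by_cases h1 : h = g
  · exact h1 ▸ hreach
  by_cases h2 : h = G.inv g
  · rw [h2, hinv]
    exact reflTransGen_adj_symm (detach_involutive hinv g) hreach
  · have hD : (G.detach g).inv h = G.inv h := detach_inv_of_ne h1 h2
    exact .single ⟨h, by rwa [hD], rfl, by rw [hD]; rfl⟩

theorem corolla_valence_iso {v : G.V} (hV : ∀ u, u = v) (hext : ∀ f, G.inv f = f) :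
    (corolla (G.valence v)).Iso G :=
  ⟨⟨fun _ => v, fun _ => PUnit.unit, fun _ => rfl, fun u => (hV u).symm⟩,
    (Fintype.equivFin _).symm.trans (Equiv.subtypeUnivEquiv fun _ => hV _),
    fun _ => (hV _).symm, fun _ => (hext _).symm⟩

def IsPendantEdge (G : HalfEdgeGraph) (f : G.F) : Prop :=
  G.att (G.inv f) ≠ G.att f ∧ ∀ g, G.att g = G.att f → G.inv g ≠ g → g = f

theorem IsPendantEdge.inv_eq_self {f g : G.F} (hp : G.IsPendantEdge f)
    (hg : G.att g = G.att f) (hgf : g ≠ f) : G.inv g = g :=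
  not_not.1 fun h => hgf (hp.2 g hg h)

theorem IsPendantEdge.att_inv_ne (hinv : Function.Involutive G.inv) {f g : G.F}
    (hp : G.IsPendantEdge f) (hg : G.att g ≠ G.att f) (hgf : g ≠ G.inv f) :
    G.att (G.inv g) ≠ G.att f := fun h => by
  by_cases hfix : G.inv g = g
  · exact hg (hfix ▸ h)
  · exact hgf (by rw [← hp.2 _ h (by rwa [hinv, ne_comm]), hinv])

theorem attachCorolla_deleteVertex_iso (hinv : Function.Involutive G.inv) {f : G.F}
    (hp : G.IsPendantEdge f) :
    ∃ i, (attachCorolla (G.deleteVertex (G.att f)) ⟨G.inv f, hp.1⟩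
      (G.valence (G.att f)) i).Iso G := by
  let ek : Fin (G.valence (G.att f)) ≃ {g // G.att g = G.att f} := (Fintype.equivFin _).symm
  let i := ek.symm ⟨f, rfl⟩
  let eV : {u // u ≠ G.att f} ⊕ PUnit ≃ G.V := (Equiv.sumComm _ _).trans
    (((Equiv.ofUnique _ _).sumCongr (Equiv.refl _)).trans (Equiv.sumCompl (· = G.att f)))
  let eF : {g // G.att g ≠ G.att f} ⊕ Fin (G.valence (G.att f)) ≃ G.F :=
    (Equiv.sumComm _ _).trans
      ((ek.sumCongr (Equiv.refl _)).trans (Equiv.sumCompl (G.att · = G.att f)))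
  let A := attachCorolla (G.deleteVertex (G.att f)) ⟨G.inv f, hp.1⟩ (G.valence (G.att f)) i
  refine ⟨i, eV, eF, ?_, ?_⟩
  · rintro (g | j)
    · rfl
    · exact (ek j).2.symm
  · rintro (g | j)
    · by_cases hgr : g = ⟨G.inv f, hp.1⟩
      · rw [show A.inv (.inl g) = .inr i from if_pos hgr]
        show (ek i).1 = G.inv g.1
        rw [ek.apply_symm_apply, hgr, hinv]
      · rw [show A.inv (.inl g) = .inl ((G.deleteVertex (G.att f)).inv g) from if_neg hgr,
          deleteVertex_inv_of_ne g (hp.att_inv_ne hinv g.2 fun h => hgr (Subtype.ext h))]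
        rfl
    · by_cases hj : j = i
      · rw [show A.inv (.inr j) = .inl ⟨G.inv f, hp.1⟩ from if_pos hj]
        show G.inv f = G.inv (ek j).1
        rw [hj, ek.apply_symm_apply]
      · rw [show A.inv (.inr j) = .inr j from if_neg hj]
        exact (hp.inv_eq_self (ek j).2 fun h =>
          hj (ek.symm_apply_eq.2 (Subtype.ext h.symm)).symm).symm

end HalfEdgeGraph

theorem IsSGraph.inLangS {S : Finset ℕ} {G : HalfEdgeGraph} (hG : IsSGraph S G) :
    InLangS S G := by
  obtain ⟨hinv, hc, hval⟩ := hG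
  by_cases hbridge : ∃ f, G.inv f ≠ f ∧ (G.detach f).Connected
  · obtain ⟨f, hf, hcf⟩ := hbridge
    have hD : InLangS S (G.detach f) :=
      IsSGraph.inLangS ⟨detach_involutive hinv f, hcf, hval⟩
    exact (hD.join f (G.inv f) detach_inv_self detach_inv_inv_self hf.symm).iso
      (joinExt_detach_iso hinv hf)
  push Not at hbridge
  rcases subsingleton_or_nontrivial G.V with hV | hV
  · obtain ⟨v⟩ := hc.1
    have hext : ∀ f, G.inv f = f := fun f => by
      by_contra hf
      exact hbridge f hf <|
        hc.of_adj id Function.surjective_id fun u w _ => Subsingleton.elim u w ▸ .refl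
    exact (InLangS.corolla (hval v)).iso (corolla_valence_iso (fun u => Subsingleton.elim u v) hext)
  · obtain ⟨f, hf, hconn⟩ := exists_connected_deleteVertex hinv hc
    have huniq : ∀ g, G.att g = G.att f → G.inv g ≠ g → g = f := fun g hg hgi => by
      by_contra hgf
      exact hbridge g hgi (connected_detach_of_connected_deleteVertex hinv hc hf hconn hg hgf)
    obtain ⟨i, hiso⟩ := attachCorolla_deleteVertex_iso hinv ⟨hf, huniq⟩
    have hD : InLangS S (G.deleteVertex (G.att f)) :=
      IsSGraph.inLangS ⟨deleteVertex_involutive hinv _, hconn,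
        fun w => (valence_deleteVertex w).symm ▸ hval w.1⟩
    exact (hD.attach _ (deleteVertex_inv_of_eq _ (by rw [hinv])) (hval _) i).iso hiso
termination_by G.complexity
decreasing_by
  · exact complexity_detach_lt hf
  · exact complexity_deleteVertex_lt

theorem sGraph_language_general (S : Finset ℕ) :
    ∀ G : HalfEdgeGraph, InLangS S G ↔ IsSGraph S G :=
  fun _ => ⟨InLangS.isSGraph, IsSGraph.inLangS⟩

/-- for a finite nonempty set `S` of integers, all at least 3, the graph
language generated by the `S`-corollas under the production rules is exactly the set of
`S`-Feynman graphs (Feynman graphs of the theory with interaction `Σ_{k∈S} λ_k φ^k/k!`). -/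
theorem sGraph_language (S : Finset ℕ) (hS : S.Nonempty) (hS3 : ∀ k ∈ S, 3 ≤ k) :
    ∀ G : HalfEdgeGraph, InLangS S G ↔ IsSGraph S G :=
  sGraph_language_general S
end
end
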